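/- arXiv:0704.3379 — 3 statements merged into one kernel-verified Lean document; each statement's English description precedes it below -/
import Mathlib

section
/- Under the same hypotheses, if additionally g(∇S(X,X),X)=0 for all vector fields X (the A^∇ condition restricted to eigenvector fields) and g(X,X) is nowhere zero for an eigenvector field X of S with eigenfunction λ, then X·λ = 0, i.e. λ is constant along the eigendistribution. -/
/-! Apply the Leibniz rule to `∇_X (λ X)`: the pairing `g(∇_X(SX) - S ∇_X X, X)` becomes
`(Xλ) g(X,X) + λ g(∇_X X, X) - g(∇_X X, SX)`, and the last two terms cancel because `S` is
`g`-symmetric with `SX = λX`. So the A^∇ condition reads `(Xλ) g(X,X) = 0`, and `g(X,X)` can be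
cancelled pointwise. -/

theorem map_add_left_of_map_sub_left {V W : Type*} [AddCommGroup V] [AddCommGroup W]
    (g : V → V → W) (hgsub : ∀ X Y Z : V, g (X - Y) Z = g X Z - g Y Z) (X Y Z : V) :
    g (X + Y) Z = g X Z + g Y Z :=
  map_add (AddMonoidHom.ofMapSub (g · Z) fun X Y => hgsub X Y Z) X Y

theorem pairing_symm_apply_eigenvector {M V : Type*} [AddCommGroup V] [Module (M → ℝ) V]
    (g : V → V → M → ℝ) (S : V → V) (lam : M → ℝ) (X : V)
    (hgsym : ∀ X Y, g X Y = g Y X)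
    (hgsmul : ∀ (c : M → ℝ) (X Y : V), g (c • X) Y = c * g X Y)
    (hSsym : ∀ X Y, g (S X) Y = g X (S Y)) (hX : S X = lam • X) (Y : V) :
    g (S Y) X = lam * g Y X := by
  rw [hSsym, hX, hgsym, hgsmul, hgsym]

theorem pairing_covariantDeriv_eigenvector_sub {M V : Type*} [AddCommGroup V] [Module (M → ℝ) V]
    (g : V → V → M → ℝ) (nab : V → V → V) (act : V → (M → ℝ) → M → ℝ)
    (S : V → V) (lam : M → ℝ) (X : V)
    (hgsym : ∀ X Y, g X Y = g Y X)
    (hgsub : ∀ X Y Z : V, g (X - Y) Z = g X Z - g Y Z)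
    (hgsmul : ∀ (c : M → ℝ) (X Y : V), g (c • X) Y = c * g X Y)
    (hSsym : ∀ X Y, g (S X) Y = g X (S Y))
    (hLeib : ∀ (Y : V) (f : M → ℝ) (Z : V), nab Y (f • Z) = act Y f • Z + f • nab Y Z)
    (hX : S X = lam • X) :
    g (nab X (S X) - S (nab X X)) X = act X lam * g X X := by
  rw [hgsub, pairing_symm_apply_eigenvector g S lam X hgsym hgsmul hSsym hX, hX, hLeib,
    map_add_left_of_map_sub_left g hgsub, hgsmul, hgsmul]
  ring

theorem eq_zero_of_mul_eq_zero_of_forall_ne_zero {M : Type*} {f h : M → ℝ} (hfh : f * h = 0)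
    (hh : ∀ p, h p ≠ 0) : f = 0 :=
  funext fun p => (mul_eq_zero.mp (congrFun hfh p)).resolve_right (hh p)

theorem eigenfunction_constant_along_eigendistribution_general
    {M V : Type*} [AddCommGroup V] [Module (M → ℝ) V]
    (g : V → V → M → ℝ) (nab : V → V → V)
    (act : V → (M → ℝ) → M → ℝ)
    (S : V → V) (lam : M → ℝ) (X : V)
    (hgsym : ∀ X Y, g X Y = g Y X)
    (hgsub : ∀ X Y Z : V, g (X - Y) Z = g X Z - g Y Z)
    (hgsmul : ∀ (c : M → ℝ) (X Y : V), g (c • X) Y = c * g X Y)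
    (hSsym : ∀ X Y, g (S X) Y = g X (S Y))
    (hLeib : ∀ (Y : V) (f : M → ℝ) (Z : V), nab Y (f • Z) = act Y f • Z + f • nab Y Z)
    -- the A^∇ condition restricted to eigenvector fields
    (hA : ∀ Y : V, g (nab Y (S Y) - S (nab Y Y)) Y = 0)
    (hX : S X = lam • X)
    -- g(X,X) is nowhere zero
    (hne : ∀ p : M, g X X p ≠ 0) :
    act X lam = 0 := by
  have hXlam : act X lam * g X X = 0 := by
    rw [← pairing_covariantDeriv_eigenvector_sub g nab act S lam X hgsym hgsub hgsmul hSsym hLeib hX]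
    exact hA X
  exact eq_zero_of_mul_eq_zero_of_forall_ne_zero hXlam hne

/-- Under the A^∇ condition `g(∇S(X,X),X) = 0` for all `X`, if `X` is
an eigenvector field of `S` with eigenfunction `λ` and `g(X,X)` is nowhere zero,
then `X·λ = 0`. Functions on the manifold are modelled as `M → ℝ`. -/
theorem eigenfunction_constant_along_eigendistribution
    {M V : Type*} [AddCommGroup V] [Module (M → ℝ) V]
    (g : V → V → M → ℝ) (nab : V → V → V) (lie : V → V → V)
    (act : V → (M → ℝ) → M → ℝ)
    (S : V → V) (lam : M → ℝ) (X : V)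
    (hgsym : ∀ X Y, g X Y = g Y X)
    (hgsub : ∀ X Y Z : V, g (X - Y) Z = g X Z - g Y Z)
    (hgsmul : ∀ (c : M → ℝ) (X Y : V), g (c • X) Y = c * g X Y)
    (htf : ∀ X Y, nab X Y - nab Y X = lie X Y)
    (hmetric : ∀ X Y Z, act X (g Y Z) = g (nab X Y) Z + g Y (nab X Z))
    (hSsym : ∀ X Y, g (S X) Y = g X (S Y))
    (hLeib : ∀ (Y : V) (f : M → ℝ) (Z : V), nab Y (f • Z) = act Y f • Z + f • nab Y Z)
    -- the A^∇ condition restricted to eigenvector fields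
    (hA : ∀ Y : V, g (nab Y (S Y) - S (nab Y Y)) Y = 0)
    (hX : S X = lam • X)
    -- g(X,X) is nowhere zero
    (hne : ∀ p : M, g X X p ≠ 0) :
    act X lam = 0 :=
  eigenfunction_constant_along_eigendistribution_general g nab act S lam X hgsym hgsub hgsmul hSsym
    hLeib hA hX hne
end

section
/- Let ∇ be a torsion-free connection on M and D_i, D_j, D_l three pairwise 'orthogonal' distributions with respect to a (0,2)-tensor g preserved by ∇ (∇g=0), such that each pairwise sum D_a ⊕ D_b is integrable. Then for sections X ∈ D_i, Y ∈ D_j, Z ∈ D_l with i, j, l pairwise distinct, the Koszul formula gives 2g(∇_X Y, Z) = 0. -/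
/-!
Koszul's formula holds for any torsion-free connection preserving a symmetric form. For
`X ∈ D_i`, `Y ∈ D_j`, `Z ∈ D_l` its three derivative terms are derivatives of the constant `0`
(orthogonality), and its three bracket terms pair a bracket lying in the sum of two of the
distributions (integrability) with a field of the third (orthogonality).
-/

section Koszul

variable {C V : Type*} [CommRing C] [AddCommGroup V]
  (g : V → V → C) (nab lie : V → V → V) (act : V → C → C)

theorem map_sub_left_of_map_add_left (hgadd : ∀ X Y Z : V, g (X + Y) Z = g X Z + g Y Z) (X Y Z : V) :
    g (X - Y) Z = g X Z - g Y Z :=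
  (AddMonoidHom.mk' (g · Z) (hgadd · · Z)).map_sub X Y

theorem act_zero_of_metric (hgsym : ∀ X Y, g X Y = g Y X)
    (hgadd : ∀ X Y Z : V, g (X + Y) Z = g X Z + g Y Z)
    (hmetric : ∀ X Y Z, act X (g Y Z) = g (nab X Y) Z + g Y (nab X Z)) (X : V) :
    act X 0 = 0 := by
  have hg0 : ∀ W, g 0 W = 0 := fun W => (AddMonoidHom.mk' (g · W) (hgadd · · W)).map_zero
  simpa only [hg0, hgsym (nab X 0) 0, add_zero] using hmetric X 0 0

theorem koszul_formula (hgsym : ∀ X Y, g X Y = g Y X)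
    (hgadd : ∀ X Y Z : V, g (X + Y) Z = g X Z + g Y Z)
    (htf : ∀ X Y, nab X Y - nab Y X = lie X Y)
    (hmetric : ∀ X Y Z, act X (g Y Z) = g (nab X Y) Z + g Y (nab X Z)) (X Y Z : V) :
    2 * g (nab X Y) Z = act X (g Y Z) + act Y (g X Z) - act Z (g X Y)
      + g (lie X Y) Z - g (lie X Z) Y - g (lie Y Z) X := by
  have torsion : ∀ A B W, g (lie A B) W = g (nab A B) W - g (nab B A) W := fun A B W => by
    rw [← htf, map_sub_left_of_map_add_left g hgadd]
  rw [hmetric X Y Z, hmetric Y X Z, hmetric Z X Y, torsion X Y Z, torsion X Z Y, torsion Y Z X,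
    hgsym Y (nab X Z), hgsym X (nab Y Z), hgsym X (nab Z Y)]
  ring

end Koszul

theorem Submodule.forall_mem_sup_eq_zero {R C V : Type*} [Semiring R] [AddMonoid C]
    [AddCommMonoid V] [Module R V] (f : V → C) (hfadd : ∀ X Y, f (X + Y) = f X + f Y)
    {p q : Submodule R V}
    (hp : ∀ X ∈ p, f X = 0) (hq : ∀ Y ∈ q, f Y = 0) : ∀ W ∈ p ⊔ q, f W = 0 := by
  intro W hW
  obtain ⟨X, hX, Y, hY, rfl⟩ := Submodule.mem_sup.mp hW
  rw [hfadd, hp X hX, hq Y hY, add_zero]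

/-- For a torsion-free metric connection and three pairwise
g-orthogonal distributions whose pairwise sums are integrable, the Koszul
formula gives `2 g(∇_X Y, Z) = 0` for sections `X ∈ D_i`, `Y ∈ D_j`, `Z ∈ D_l`. -/
theorem koszul_vanishing_three_distributions
    {C V : Type*} [CommRing C] [AddCommGroup V] [Module ℝ V]
    (g : V → V → C) (nab : V → V → V) (lie : V → V → V) (act : V → C → C)
    (Di Dj Dl : Submodule ℝ V)
    (hgsym : ∀ X Y, g X Y = g Y X)
    (hgadd : ∀ X Y Z : V, g (X + Y) Z = g X Z + g Y Z)
    (htf : ∀ X Y, nab X Y - nab Y X = lie X Y)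
    (hmetric : ∀ X Y Z, act X (g Y Z) = g (nab X Y) Z + g Y (nab X Z))
    -- pairwise orthogonality
    (horthoij : ∀ X ∈ Di, ∀ Y ∈ Dj, g X Y = 0)
    (horthoil : ∀ X ∈ Di, ∀ Z ∈ Dl, g X Z = 0)
    (horthojl : ∀ Y ∈ Dj, ∀ Z ∈ Dl, g Y Z = 0)
    -- each pairwise sum is integrable
    (hintij : ∀ X ∈ Di, ∀ Y ∈ Dj, lie X Y ∈ Di ⊔ Dj)
    (hintil : ∀ X ∈ Di, ∀ Z ∈ Dl, lie X Z ∈ Di ⊔ Dl)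
    (hintjl : ∀ Y ∈ Dj, ∀ Z ∈ Dl, lie Y Z ∈ Dj ⊔ Dl) :
    ∀ X ∈ Di, ∀ Y ∈ Dj, ∀ Z ∈ Dl, (2 : C) * g (nab X Y) Z = 0 := by
  intro X hX Y hY Z hZ
  have hXY : g (lie X Y) Z = 0 :=
    Submodule.forall_mem_sup_eq_zero (g · Z) (hgadd · · Z)
      (horthoil · · Z hZ) (horthojl · · Z hZ) _ (hintij X hX Y hY)
  have hXZ : g (lie X Z) Y = 0 :=
    Submodule.forall_mem_sup_eq_zero (g · Y) (hgadd · · Y)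
      (horthoij · · Y hY) (fun W hW => hgsym W Y ▸ horthojl Y hY W hW) _ (hintil X hX Z hZ)
  have hYZ : g (lie Y Z) X = 0 :=
    Submodule.forall_mem_sup_eq_zero (g · X) (hgadd · · X)
      (fun W hW => hgsym X W ▸ horthoij X hX W hW) (fun W hW => hgsym X W ▸ horthoil X hX W hW)
      _ (hintjl Y hY Z hZ)
  have hact := act_zero_of_metric g nab act hgsym hgadd hmetric
  rw [koszul_formula g nab lie act hgsym hgadd htf hmetric, horthojl Y hY Z hZ,
    horthoil X hX Z hZ, horthoij X hX Y hY, hact, hact, hact, hXY, hXZ, hYZ]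
  ring
end

section
/- Let S be a g-symmetric (1,1)-tensor with constant real eigenvalues λ₀, λ₁, …, λ_k and eigendistributions D₀ (= radical of g), D₁, …, D_k, such that every sum D_{α₁} ⊕ ⋯ ⊕ D_{α_p} of eigendistributions is integrable, and D₀ ⊕ D_i is autoparallel-closed in the sense that ∇_ξ X ∈ D₀ ⊕ D_i for ξ ∈ D₀, X ∈ D_i. Then ∇S(ξ, X) = (λ_i − λ₀)·p₀(∇_ξ X) ∈ D₀, where p₀ is the projection onto D₀; in particular ∇S(ξ, ·) takes values in the radical D₀. -/
/-! Since `∇_ξ` is linear and `S X = λᵢ X`, we get `∇S(ξ, X) = λᵢ ∇_ξ X - S(∇_ξ X)`. Splitting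
`∇_ξ X ∈ D₀ ⊕ Dᵢ` into its two components, `S` acts by `λᵢ` on the `Dᵢ`-part, which therefore
cancels, leaving `(λᵢ - λ₀)` times the `D₀`-part. -/

namespace LinearMap

variable {R V : Type*} [CommRing R] [AddCommGroup V] [Module R V]

theorem smul_sub_apply_of_sub_mem_eigen (S : V →ₗ[R] V) {D0 Di : Submodule R V} {lam0 lami : R}
    (heig0 : ∀ v ∈ D0, S v = lam0 • v) (heigi : ∀ v ∈ Di, S v = lami • v)
    {v w : V} (hw : w ∈ D0) (hvw : v - w ∈ Di) :
    lami • v - S v = (lami - lam0) • w := by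
  have hSv : S v = lam0 • w + lami • (v - w) := by
    rw [← heig0 w hw, ← heigi _ hvw, ← map_add, add_sub_cancel]
  rw [hSv]
  module

end LinearMap

theorem covderiv_S_radical_valued_general
    {V : Type*} [AddCommGroup V] [Module ℝ V]
    (nab : V → V → V) (S p0 : V →ₗ[ℝ] V)
    (D0 Di : Submodule ℝ V) (lam0 lami : ℝ)
    (ξ X : V) (hX : X ∈ Di)
    (hnabsmul : ∀ (a : ℝ) (Y Z : V), nab Y (a • Z) = a • nab Y Z)
    -- constant eigenvalues on the eigendistributions
    (heig0 : ∀ v ∈ D0, S v = lam0 • v)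
    (heigi : ∀ v ∈ Di, S v = lami • v)
    -- p₀ is the projection onto D₀ in the decomposition D₀ ⊕ D_i ⊕ ⋯
    (hp0mem : ∀ v : V, p0 v ∈ D0)
    (hsplit : ∀ v ∈ D0 ⊔ Di, v - p0 v ∈ Di)
    -- D₀ ⊕ D_i is autoparallel-closed
    (hmem : nab ξ X ∈ D0 ⊔ Di) :
    nab ξ (S X) - S (nab ξ X) = (lami - lam0) • p0 (nab ξ X) ∧
    nab ξ (S X) - S (nab ξ X) ∈ D0 := by
  have hnabS : nab ξ (S X) = lami • nab ξ X := by rw [heigi X hX, hnabsmul]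
  rw [hnabS, S.smul_sub_apply_of_sub_mem_eigen heig0 heigi (hp0mem _) (hsplit _ hmem)]
  exact ⟨rfl, D0.smul_mem _ (hp0mem _)⟩

/-- With constant eigenvalues `λ₀, λ_i`, eigendistributions
`D₀` (the radical) and `D_i`, `ξ ∈ D₀`, `X ∈ D_i`, and `∇_ξ X ∈ D₀ ⊕ D_i`
(from integrability of the almost product structure), one has
`∇S(ξ,X) = (λ_i − λ₀) • p₀(∇_ξ X) ∈ D₀`, where `p₀` projects onto `D₀`. -/
theorem covderiv_S_radical_valued
    {V : Type*} [AddCommGroup V] [Module ℝ V]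
    (nab : V → V → V) (S p0 : V →ₗ[ℝ] V)
    (D0 Di : Submodule ℝ V) (lam0 lami : ℝ)
    (ξ X : V) (hξ : ξ ∈ D0) (hX : X ∈ Di)
    (hnabsmul : ∀ (a : ℝ) (Y Z : V), nab Y (a • Z) = a • nab Y Z)
    -- constant eigenvalues on the eigendistributions
    (heig0 : ∀ v ∈ D0, S v = lam0 • v)
    (heigi : ∀ v ∈ Di, S v = lami • v)
    -- p₀ is the projection onto D₀ in the decomposition D₀ ⊕ D_i ⊕ ⋯
    (hp0mem : ∀ v : V, p0 v ∈ D0)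
    (hp0id : ∀ v ∈ D0, p0 v = v)
    (hsplit : ∀ v ∈ D0 ⊔ Di, v - p0 v ∈ Di)
    -- D₀ ⊕ D_i is autoparallel-closed
    (hmem : nab ξ X ∈ D0 ⊔ Di) :
    nab ξ (S X) - S (nab ξ X) = (lami - lam0) • p0 (nab ξ X) ∧
    nab ξ (S X) - S (nab ξ X) ∈ D0 :=
  covderiv_S_radical_valued_general nab S p0 D0 Di lam0 lami ξ X hX hnabsmul heig0 heigi hp0mem
    hsplit hmem
end
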